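/- arXiv:math/0512219 — 2 statements merged into one kernel-verified Lean document; each statement's English description precedes it below -/
import Mathlib

section
/- Let α be a positive irrational algebraic real number. Let (f_ε)_{ε∈(0,1)} be a moderate net of smooth functions ℝ → ℂ such that the nets (x ↦ f_ε(x + 1) − f_ε(x))_ε and (x ↦ f_ε(x + α) − f_ε(x))_ε are both negligible. Then the net (x ↦ f_ε(x) − f_ε(0))_ε is negligible; that is, a Colombeau generalized function on ℝ with periods 1 and α is a generalized constant. -/
def Moderate (u : ℝ → ℝ → ℂ) : Prop :=
  ∀ K : Set ℝ, IsCompact K → ∀ n : ℕ,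
    ∃ b : ℝ, ∃ C > (0 : ℝ), ∃ ε₀ > (0 : ℝ), ∀ ε ∈ Set.Ioo (0 : ℝ) 1, ε < ε₀ →
      ∀ x ∈ K, ‖iteratedFDeriv ℝ n (u ε) x‖ ≤ C * ε ^ b

def Negligible (u : ℝ → ℝ → ℂ) : Prop :=
  ∀ K : Set ℝ, IsCompact K → ∀ n : ℕ, ∀ b : ℝ,
    ∃ C > (0 : ℝ), ∃ ε₀ > (0 : ℝ), ∀ ε ∈ Set.Ioo (0 : ℝ) 1, ε < ε₀ →
      ∀ x ∈ K, ‖iteratedFDeriv ℝ n (u ε) x‖ ≤ C * ε ^ b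

-- Liouville-type lower bound for algebraic irrational numbers
theorem alg_lower_bound (α : ℝ) (hirr : Irrational α) (halg : IsAlgebraic ℚ α) :
    ∃ d : ℕ, ∃ c > (0:ℝ), ∀ p q : ℤ, 1 ≤ q → c / (q:ℝ)^d ≤ |(q:ℝ) * α - p| := by
  have halgZ : IsAlgebraic ℤ α := (IsFractionRing.isAlgebraic_iff ℤ ℚ ℝ).mpr halg
  have hnL : ¬ Liouville α := fun hL => hL.transcendental halgZ
  rw [Liouville] at hnL
  push_neg at hnL
  obtain ⟨d, hd⟩ := hnL
  -- lower bound for q = 1 : distance from α to integers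
  have h1 : ∃ c1 > (0:ℝ), ∀ p : ℤ, c1 ≤ |α - p| := by
    refine ⟨|α - round α|, ?_, ?_⟩
    · rw [gt_iff_lt, abs_pos, sub_ne_zero]
      exact fun h => hirr ⟨round α, by exact_mod_cast h.symm⟩
    · intro p
      exact round_le α p
  obtain ⟨c1, hc1, hc1b⟩ := h1
  refine ⟨d, min c1 1, lt_min hc1 one_pos, ?_⟩
  intro p q hq
  rcases eq_or_lt_of_le hq with h | h
  · -- q = 1
    have : (q:ℝ) = 1 := by exact_mod_cast h.symm
    rw [this]
    simp only [one_mul, one_pow, div_one]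
    exact le_trans (min_le_left _ _) (hc1b p)
  · -- q ≥ 2
    have hq1 : (1:ℝ) < q := by exact_mod_cast h
    have hq0 : (0:ℝ) < q := by linarith
    have hne : α ≠ p / q := by
      intro hEq
      exact hirr ⟨(p : ℚ) / q, by push_cast; exact hEq.symm⟩
    have := hd p q h hne
    have h2 : 1 / (q:ℝ)^d ≤ |α - p/q| := this
    have h3 : |(q:ℝ) * α - p| = q * |α - p/q| := by
      have he : (q:ℝ) * (α - p/q) = q * α - p := by field_simp
      rw [← he, abs_mul, abs_of_pos hq0]
    rw [h3]
    calc min c1 1 / (q:ℝ)^d ≤ 1 / (q:ℝ)^d := by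
          gcongr; exact min_le_right _ _
      _ ≤ q * (1 / (q:ℝ)^d) := le_mul_of_one_le_left (by positivity) (le_of_lt hq1)
      _ ≤ q * |α - p/q| := by gcongr


-- walk by unit steps
theorem unit_walk (F : ℝ → ℂ) (lo hi B : ℝ) (hB0 : 0 ≤ B)
    (hB : ∀ z ∈ Set.Icc lo hi, ‖F (z+1) - F z‖ ≤ B) :
    ∀ r : ℕ, ∀ y : ℝ, y ∈ Set.Icc lo hi → y + r ∈ Set.Icc lo hi →
      ‖F (y + r) - F y‖ ≤ r * B := by
  intro r
  induction r with
  | zero => intro y hy hyr; simp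
  | succ r ih =>
    intro y hy hyr
    have hyr' : y + r ∈ Set.Icc lo hi := by
      constructor
      · have := hy.1; push_cast; linarith
      · have := hyr.2; push_cast at this ⊢; linarith
    have h1 : ‖F (y + (r+1)) - F (y + r)‖ ≤ B := by
      have := hB (y + r) hyr'
      have he : y + r + 1 = y + ((r:ℝ)+1) := by ring
      rwa [he] at this
    calc ‖F (y + ((r:ℕ)+1:ℕ)) - F y‖
        = ‖(F (y + ((r:ℝ)+1)) - F (y + r)) + (F (y + r) - F y)‖ := by push_cast; ring_nf
      _ ≤ ‖F (y + ((r:ℝ)+1)) - F (y + r)‖ + ‖F (y + r) - F y‖ := norm_add_le _ _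
      _ ≤ B + r * B := add_le_add h1 (ih y hy hyr')
      _ = ((r:ℕ)+1:ℕ) * B := by push_cast; ring

theorem int_walk (F : ℝ → ℂ) (lo hi B : ℝ) (hB0 : 0 ≤ B)
    (hB : ∀ z ∈ Set.Icc lo hi, ‖F (z+1) - F z‖ ≤ B) :
    ∀ p : ℤ, ∀ y : ℝ, y ∈ Set.Icc lo hi → y + p ∈ Set.Icc lo hi →
      ‖F (y + p) - F y‖ ≤ |(p:ℝ)| * B := by
  intro p y hy hyp
  rcases le_or_gt 0 p with h | h
  · lift p to ℕ using h
    have := unit_walk F lo hi B hB0 hB p y hy (by exact_mod_cast hyp)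
    push_cast at this ⊢
    rwa [abs_of_nonneg (by positivity)]
  · obtain ⟨n, rfl⟩ : ∃ n : ℕ, p = -(n:ℤ) := ⟨p.natAbs, by omega⟩
    have h2 : (y + (-(n:ℤ))) + (n:ℝ) = y := by push_cast; ring
    have := unit_walk F lo hi B hB0 hB n (y + (-(n:ℤ):ℝ)) (by exact_mod_cast hyp) (by rw [h2]; exact hy)
    rw [h2] at this
    rw [← norm_neg]
    simp only [neg_sub]
    push_cast at this ⊢
    calc ‖F y - F (y + -(n:ℝ))‖ ≤ n * B := this
      _ ≤ |(-(n:ℝ))| * B := by rw [abs_neg, abs_of_nonneg (by positivity)]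

theorem alpha_walk (F : ℝ → ℂ) (α R B : ℝ) (hα : 0 < α) (hR : 1 ≤ R) (hB0 : 0 ≤ B)
    (hB1 : ∀ z ∈ Set.Icc (-(R+3+α)) (R+3+α), ‖F (z+1) - F z‖ ≤ B)
    (hBα : ∀ z ∈ Set.Icc (-(R+3+α)) (R+3+α), ‖F (z+α) - F z‖ ≤ B) :
    ∀ j : ℕ, ∀ p q : ℤ, q.natAbs = j → |(p:ℝ) + q*α| ≤ R+1 →
      ‖F ((p:ℝ) + q*α) - F 0‖ ≤ ((α+R+4) * j + (R+2)) * B := by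
  have hM : (0:ℝ) < R+3+α := by linarith
  intro j
  induction j with
  | zero =>
    intro p q hq hv
    have hq0 : q = 0 := by omega
    subst hq0
    simp only [Int.cast_zero, zero_mul, add_zero] at hv ⊢
    have h0 : (0:ℝ) ∈ Set.Icc (-(R+3+α)) (R+3+α) := by
      constructor <;> linarith
    have hp : (0:ℝ) + p ∈ Set.Icc (-(R+3+α)) (R+3+α) := by
      rw [zero_add]
      rw [abs_le] at hv
      constructor <;> linarith [hv.1, hv.2]
    have := int_walk F _ _ B hB0 hB1 p 0 h0 hp
    rw [zero_add] at this
    refine le_trans this ?_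
    push_cast
    nlinarith [hv, abs_nonneg (p:ℝ)]
  | succ j ih =>
    intro p q hq hv
    have hqne : q ≠ 0 := by omega
    set s : ℤ := if 0 < q then 1 else -1 with hs
    have hq' : (q - s).natAbs = j := by
      rcases lt_or_ge 0 q with h | h
      · simp only [hs, if_pos h]; omega
      · simp only [hs, if_neg (not_lt.mpr h)]; omega
    set v : ℝ := (p:ℝ) + q*α with hvdef
    set w : ℝ := (p:ℝ) + (q-s)*α with hwdef
    have hsw : w = v - (s:ℝ)*α := by rw [hvdef, hwdef]; push_cast; ring
    have hwbd : |w| ≤ R+1+α := by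
      rw [hsw]
      have hs1 : |(s:ℝ)| = 1 := by
        rcases lt_or_ge 0 q with h | h
        · simp [hs, if_pos h]
        · simp [hs, if_neg (not_lt.mpr h)]
      calc |v - (s:ℝ)*α| ≤ |v| + |(s:ℝ)*α| := abs_sub _ _
        _ = |v| + α := by rw [abs_mul, hs1, one_mul, abs_of_pos hα]
        _ ≤ R+1+α := by linarith [hv]
    set r : ℤ := -⌊w⌋ with hr
    have hfr1 : (0:ℝ) ≤ w + r := by
      rw [hr]; push_cast
      linarith [Int.floor_le w]
    have hfr2 : w + r < 1 := by
      rw [hr]; push_cast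
      linarith [Int.lt_floor_add_one w]
    have hrbd : |(r:ℝ)| ≤ R+2+α := by
      rw [hr]
      push_cast
      rw [abs_neg, abs_le]
      constructor
      · linarith [Int.lt_floor_add_one w, neg_abs_le w, hwbd]
      · linarith [Int.floor_le w, le_abs_self w, hwbd]
    -- the three pieces
    have hwIcc : w ∈ Set.Icc (-(R+3+α)) (R+3+α) := by
      rw [abs_le] at hwbd
      constructor <;> linarith [hwbd.1, hwbd.2]
    have hvIcc : v ∈ Set.Icc (-(R+3+α)) (R+3+α) := by
      rw [abs_le] at hv
      constructor <;> linarith [hv.1, hv.2]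
    have hv'Icc : w + r ∈ Set.Icc (-(R+3+α)) (R+3+α) := by
      constructor <;> linarith
    have t1 : ‖F v - F w‖ ≤ B := by
      rcases lt_or_ge 0 q with h | h
      · have hs1 : (s:ℝ) = 1 := by simp [hs, if_pos h]
        have : v = w + α := by rw [hsw, hs1]; ring
        rw [this]
        exact hBα w hwIcc
      · have hs1 : (s:ℝ) = -1 := by simp [hs, if_neg (not_lt.mpr h)]
        have : w = v + α := by rw [hsw, hs1]; ring
        rw [this, ← norm_neg, neg_sub]
        exact hBα v hvIcc
    have t2 : ‖F (w + r) - F w‖ ≤ (R+2+α) * B := by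
      have := int_walk F _ _ B hB0 hB1 r w hwIcc hv'Icc
      calc ‖F (w + r) - F w‖ ≤ |(r:ℝ)| * B := this
        _ ≤ (R+2+α) * B := by gcongr
    have t3 : ‖F (w + r) - F 0‖ ≤ ((α+R+4) * j + (R+2)) * B := by
      have hcast : w + (r:ℝ) = ((p + r : ℤ):ℝ) + ((q - s : ℤ):ℝ)*α := by
        rw [hwdef]; push_cast; ring
      have habs : |((p + r : ℤ):ℝ) + ((q - s : ℤ):ℝ)*α| ≤ R+1 := by
        rw [← hcast, abs_le]
        constructor <;> linarith
      have := ih (p + r) (q - s) hq' habs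
      rwa [← hcast] at this
    have tri := dist_triangle4 (F v) (F w) (F (w + r)) (F 0)
    simp only [dist_eq_norm] at tri
    rw [norm_sub_rev (F w) (F (w + r))] at tri
    calc ‖F v - F 0‖ ≤ ‖F v - F w‖ + ‖F (w+r) - F w‖ + ‖F (w+r) - F 0‖ := tri
      _ ≤ B + (R+2+α) * B + ((α+R+4) * j + (R+2)) * B :=
          add_le_add (add_le_add t1 t2) t3
      _ ≤ ((α+R+4) * (j+1:ℕ) + (R+2)) * B := by push_cast; nlinarith

set_option maxHeartbeats 1000000 in
theorem neg_order0 (α : ℝ) (hα_pos : 0 < α) (hα_irr : Irrational α) (hα_alg : IsAlgebraic ℚ α)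
    (f : ℝ → ℝ → ℂ)
    (hf_smooth : ∀ ε ∈ Set.Ioo (0:ℝ) 1, ContDiff ℝ (⊤ : ℕ∞) (f ε))
    (hf_mod : Moderate f)
    (hf_per1 : Negligible fun ε x => f ε (x+1) - f ε x)
    (hf_perα : Negligible fun ε x => f ε (x+α) - f ε x)
    (K : Set ℝ) (hK : IsCompact K) (b : ℝ) :
    ∃ C > (0:ℝ), ∃ ε₀ > (0:ℝ), ∀ ε ∈ Set.Ioo (0:ℝ) 1, ε < ε₀ → ∀ x ∈ K,
      ‖f ε x - f ε 0‖ ≤ C * ε ^ b := by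
  obtain ⟨r, hr⟩ := hK.isBounded.subset_closedBall 0
  set R : ℝ := max r 1 with hRdef
  have hR1 : (1:ℝ) ≤ R := le_max_right _ _
  have hKR : K ⊆ Set.Icc (-R) R := by
    refine hr.trans ?_
    rw [Real.closedBall_eq_Icc]
    apply Set.Icc_subset_Icc
    · simp only [zero_sub, hRdef, neg_le_neg_iff]; exact le_max_left r 1
    · simp only [zero_add, hRdef]; exact le_max_left r 1
  obtain ⟨d, c, hc, hlb⟩ := alg_lower_bound α hα_irr hα_alg
  set K' : Set ℝ := Set.Icc (-(R+3+α)) (R+3+α) with hK'def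
  obtain ⟨b₂, C₂, hC₂, ε₂, hε₂, hmod2⟩ := hf_mod K' isCompact_Icc 1
  set s : ℝ := max (b - b₂) 0 + 1 with hsdef
  have hs0 : 0 < s := by positivity
  have hbb : b ≤ b₂ + s := by
    have := le_max_left (b - b₂) 0
    simp only [hsdef]; linarith
  set b' : ℝ := b + s * ((d:ℝ)+1) with hb'def
  obtain ⟨C₁, hC₁, ε₁, hε₁, hper1⟩ := hf_per1 K' isCompact_Icc 0 b'
  obtain ⟨Cα, hCα, εα, hεα, hperα⟩ := hf_perα K' isCompact_Icc 0 b'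
  set Cm : ℝ := max C₁ Cα with hCmdef
  have hCm : 0 < Cm := lt_max_of_lt_left hC₁
  set A₁ : ℝ := (α+R+4) * (R/c + 1) + (R+2) with hA₁def
  have hA₁ : 0 < A₁ := by positivity
  refine ⟨A₁ * 2^(d+1) * Cm + C₂, by positivity, min ε₁ (min εα ε₂), by positivity, ?_⟩
  intro ε hε hεlt x hx
  obtain ⟨hεlt1, hεltα, hεlt2⟩ : ε < ε₁ ∧ ε < εα ∧ ε < ε₂ := by
    rw [lt_min_iff, lt_min_iff] at hεlt; tauto
  have hε0 : 0 < ε := hε.1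
  have hε1 : ε < 1 := hε.2
  -- the scale N
  have hεs : 1 < ε ^ (-s) := by
    rw [Real.one_lt_rpow_iff_of_pos hε0]
    right; exact ⟨hε1, by linarith⟩
  set N : ℕ := ⌈ε ^ (-s)⌉₊ with hNdef
  have hNpos : 0 < N := Nat.ceil_pos.mpr (by positivity)
  have hNge : ε ^ (-s) ≤ (N:ℝ) := Nat.le_ceil _
  have hN1 : (1:ℝ) ≤ (N:ℝ) := le_trans (le_of_lt hεs) hNge
  have hNle : (N:ℝ) ≤ 2 * ε ^ (-s) := by
    have h1 := Nat.ceil_lt_add_one (le_of_lt (show (0:ℝ) < ε^(-s) by positivity))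
    have h2 : (1:ℝ) ≤ ε^(-s) := le_of_lt hεs
    simp only [hNdef]; linarith
  -- Dirichlet
  obtain ⟨j, k, hk0, hkN, hjk⟩ := Real.exists_int_int_abs_mul_sub_le α hNpos
  set β : ℝ := (k:ℝ)*α - j with hβdef
  have hk0' : (0:ℝ) < k := by exact_mod_cast hk0
  have hβne : β ≠ 0 := by
    rw [hβdef, sub_ne_zero]
    intro h
    refine hα_irr ⟨(j:ℚ)/(k:ℚ), ?_⟩
    push_cast
    rw [div_eq_iff (ne_of_gt hk0')]
    linarith
  have hβpos : 0 < |β| := abs_pos.mpr hβne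
  have hβlow : c / (N:ℝ)^d ≤ |β| := by
    refine le_trans ?_ (hlb j k hk0)
    gcongr
    exact_mod_cast hkN
  have hβup : |β| ≤ ε ^ s := by
    have h1 : |β| ≤ 1/((N:ℝ)+1) := hjk
    have hεspos : (0:ℝ) < ε ^ s := Real.rpow_pos_of_pos hε0 s
    have h3 : ε ^ s * ε ^ (-s) = 1 := by
      rw [← Real.rpow_add hε0]; norm_num
    have h2 : (1:ℝ)/((N:ℝ)+1) ≤ ε ^ s := by
      rw [div_le_iff₀ (by linarith)]
      have h4 : ε^s * (ε^(-s)) ≤ ε^s * (N:ℝ) := mul_le_mul_of_nonneg_left hNge (le_of_lt hεspos)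
      have h5 : ε^s*((N:ℝ)+1) = ε^s*(N:ℝ) + ε^s := by ring
      linarith
    linarith
  have hεsle1 : ε ^ s ≤ 1 :=
    Real.rpow_le_one (le_of_lt hε0) (le_of_lt hε1) (le_of_lt hs0)
  -- approximate x by t*β
  set t : ℤ := round (x / β) with htdef
  set y : ℝ := (t:ℝ) * β with hydef
  have habsr : |x/β - t| ≤ 1/2 := abs_sub_round (x/β)
  have hxy : |x - y| ≤ ε ^ s := by
    have h1 : x - y = β * (x/β - t) := by
      rw [hydef]; field_simp
    rw [h1, abs_mul]
    have h2 : |β| * |x/β - t| ≤ |β| * 1 :=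
      mul_le_mul_of_nonneg_left (le_trans habsr (by norm_num)) (abs_nonneg β)
    rw [mul_one] at h2
    linarith
  have hxR : |x| ≤ R := by
    have h := hKR hx
    rw [abs_le]; exact ⟨h.1, h.2⟩
  have hxy1 : |x - y| ≤ 1 := le_trans hxy hεsle1
  have hyR : |y| ≤ R + 1 := by
    have h : |y| ≤ |x| + |x - y| := by
      calc |y| = |x - (x - y)| := by ring_nf
        _ ≤ |x| + |x - y| := abs_sub _ _
    linarith
  -- the integer pair
  set q : ℤ := t * k with hqdef
  set p : ℤ := -(t * j) with hpdef
  have hcast : (p:ℝ) + (q:ℝ)*α = y := by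
    rw [hpdef, hqdef, hydef, hβdef]; push_cast; ring
  have htabs : |(t:ℝ)| ≤ |x/β| + 1/2 := by
    calc |(t:ℝ)| = |x/β - (x/β - t)| := by ring_nf
      _ ≤ |x/β| + |x/β - t| := abs_sub _ _
      _ ≤ |x/β| + 1/2 := by linarith
  have hβinv : 1/|β| ≤ (N:ℝ)^d / c := by
    rw [div_le_div_iff₀ hβpos hc, one_mul]
    rw [div_le_iff₀ (show (0:ℝ) < (N:ℝ)^d by positivity)] at hβlow
    linarith [mul_comm |β| ((N:ℝ)^d)]
  have hxβ : |x/β| ≤ R * ((N:ℝ)^d / c) := by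
    rw [abs_div]
    calc |x|/|β| = |x| * (1/|β|) := by ring
      _ ≤ R * ((N:ℝ)^d / c) := by
          apply mul_le_mul hxR hβinv (by positivity) (by linarith)
  have hNd1 : (1:ℝ) ≤ (N:ℝ)^d := one_le_pow₀ hN1
  have hNd1' : (1:ℝ) ≤ (N:ℝ)^(d+1) := one_le_pow₀ hN1
  have hqabs : |(q:ℝ)| ≤ (R/c + 1) * (N:ℝ)^(d+1) := by
    have hk_le : (k:ℝ) ≤ (N:ℝ) := by exact_mod_cast hkN
    have habs : |(q:ℝ)| = |(t:ℝ)| * (k:ℝ) := by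
      rw [hqdef]; push_cast; rw [abs_mul, abs_of_pos hk0']
    have ht' : |(t:ℝ)| ≤ R * ((N:ℝ)^d / c) + 1 := by linarith
    have hRc : (0:ℝ) ≤ R/c := by positivity
    calc |(q:ℝ)| = |(t:ℝ)| * (k:ℝ) := habs
      _ ≤ (R * ((N:ℝ)^d / c) + 1) * (N:ℝ) := by
          apply mul_le_mul ht' hk_le (by linarith) (by positivity)
      _ ≤ (R/c + 1) * (N:ℝ)^(d+1) := by
          rw [pow_succ]
          have e1 : (R*((N:ℝ)^d/c)+1)*(N:ℝ) = (R/c)*((N:ℝ)^d*(N:ℝ)) + (N:ℝ) := by ring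
          have e2 : (R/c+1)*((N:ℝ)^d*(N:ℝ)) = (R/c)*((N:ℝ)^d*(N:ℝ)) + (N:ℝ)^d*(N:ℝ) := by ring
          have e3 : (N:ℝ) ≤ (N:ℝ)^d*(N:ℝ) := by
            have h6 := mul_le_mul_of_nonneg_right hNd1 (show (0:ℝ) ≤ (N:ℝ) by positivity)
            linarith [one_mul (N:ℝ)]
          linarith
  -- the defect bound B
  have hεb' : (0:ℝ) < ε ^ b' := Real.rpow_pos_of_pos hε0 b'
  set B : ℝ := Cm * ε ^ b' with hBdef
  have hB0 : (0:ℝ) ≤ B := by positivity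
  have hB1 : ∀ z ∈ Set.Icc (-(R+3+α)) (R+3+α), ‖f ε (z+1) - f ε z‖ ≤ B := by
    intro z hz
    have h := hper1 ε hε hεlt1 z hz
    rw [norm_iteratedFDeriv_zero] at h
    calc ‖f ε (z+1) - f ε z‖ ≤ C₁ * ε ^ b' := h
      _ ≤ B := by rw [hBdef]; gcongr; exact le_max_left _ _
  have hBα : ∀ z ∈ Set.Icc (-(R+3+α)) (R+3+α), ‖f ε (z+α) - f ε z‖ ≤ B := by
    intro z hz
    have h := hperα ε hε hεltα z hz
    rw [norm_iteratedFDeriv_zero] at h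
    calc ‖f ε (z+α) - f ε z‖ ≤ Cα * ε ^ b' := h
      _ ≤ B := by rw [hBdef]; gcongr; exact le_max_right _ _
  have hyR' : |(p:ℝ) + (q:ℝ)*α| ≤ R + 1 := by rw [hcast]; exact hyR
  have hwalk := alpha_walk (f ε) α R B hα_pos hR1 hB0 hB1 hBα q.natAbs p q rfl hyR'
  rw [hcast] at hwalk
  have hnatq : ((q.natAbs:ℕ):ℝ) = |(q:ℝ)| := by
    simp [Nat.cast_natAbs]
  have hstep : ((α+R+4) * ((q.natAbs:ℕ):ℝ) + (R+2)) ≤ A₁ * (N:ℝ)^(d+1) := by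
    rw [hnatq, hA₁def]
    have t1 : (α+R+4) * |(q:ℝ)| ≤ (α+R+4) * ((R/c + 1) * (N:ℝ)^(d+1)) := by
      apply mul_le_mul_of_nonneg_left hqabs (by linarith)
    have t2 : (R+2) ≤ (R+2)*(N:ℝ)^(d+1) := le_mul_of_one_le_right (by linarith) hNd1'
    have e : ((α+R+4)*(R/c+1) + (R+2))*(N:ℝ)^(d+1)
        = (α+R+4)*((R/c+1)*(N:ℝ)^(d+1)) + (R+2)*(N:ℝ)^(d+1) := by ring
    linarith
  have hterm1 : ‖f ε y - f ε 0‖ ≤ A₁ * (N:ℝ)^(d+1) * B :=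
    le_trans hwalk (mul_le_mul_of_nonneg_right hstep hB0)
  have hNpow : ((N:ℝ))^(d+1) ≤ 2^(d+1) * ε ^ (-(s*((d:ℝ)+1))) := by
    have h1 : ((N:ℝ))^(d+1) ≤ (2*ε^(-s))^(d+1) := pow_le_pow_left₀ (by positivity) hNle _
    have h3 : (ε^(-s))^(d+1) = ε^(-(s*((d:ℝ)+1))) := by
      rw [← Real.rpow_natCast (ε^(-s)) (d+1), ← Real.rpow_mul (le_of_lt hε0)]
      congr 1; push_cast; ring
    rw [mul_pow, h3] at h1
    exact h1
  have hεcomb : ε ^ (-(s*((d:ℝ)+1))) * ε ^ b' = ε ^ b := by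
    rw [← Real.rpow_add hε0, hb'def]; congr 1; ring
  have hεbpos : (0:ℝ) < ε ^ b := Real.rpow_pos_of_pos hε0 b
  have hterm1' : ‖f ε y - f ε 0‖ ≤ A₁ * 2^(d+1) * Cm * ε ^ b := by
    calc ‖f ε y - f ε 0‖ ≤ A₁ * (N:ℝ)^(d+1) * B := hterm1
      _ ≤ A₁ * (2^(d+1) * ε^(-(s*((d:ℝ)+1)))) * B := by gcongr
      _ = A₁ * 2^(d+1) * Cm * (ε^(-(s*((d:ℝ)+1))) * ε^b') := by rw [hBdef]; ring
      _ = A₁ * 2^(d+1) * Cm * ε ^ b := by rw [hεcomb]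
  -- MVT part
  have hdiff : ∀ z ∈ Set.Icc (-(R+3+α)) (R+3+α), DifferentiableAt ℝ (f ε) z := fun z _ =>
    ((hf_smooth ε hε).differentiable (by simp)).differentiableAt
  have hdbound : ∀ z ∈ Set.Icc (-(R+3+α)) (R+3+α), ‖deriv (f ε) z‖ ≤ C₂ * ε ^ b₂ := by
    intro z hz
    have h := hmod2 ε hε hεlt2 z hz
    rwa [norm_iteratedFDeriv_eq_norm_iteratedDeriv, iteratedDeriv_one] at h
  have hyK' : y ∈ Set.Icc (-(R+3+α)) (R+3+α) := by
    rw [abs_le] at hyR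
    constructor
    · linarith [hyR.1]
    · linarith [hyR.2]
  have hxK' : x ∈ Set.Icc (-(R+3+α)) (R+3+α) := by
    rw [abs_le] at hxR
    constructor
    · linarith [hxR.1]
    · linarith [hxR.2]
  have hmvt := (convex_Icc _ _).norm_image_sub_le_of_norm_deriv_le hdiff hdbound hyK' hxK'
  have hterm2 : ‖f ε x - f ε y‖ ≤ C₂ * ε ^ b := by
    have h1 : ‖x - y‖ ≤ ε ^ s := by rw [Real.norm_eq_abs]; exact hxy
    have h2 : ε ^ b₂ * ε ^ s = ε ^ (b₂ + s) := (Real.rpow_add hε0 _ _).symm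
    have h3 : ε ^ (b₂+s) ≤ ε ^ b := Real.rpow_le_rpow_of_exponent_ge hε0 (le_of_lt hε1) hbb
    have hεb₂ : (0:ℝ) ≤ ε ^ b₂ := le_of_lt (Real.rpow_pos_of_pos hε0 b₂)
    calc ‖f ε x - f ε y‖ ≤ C₂ * ε ^ b₂ * ‖x-y‖ := hmvt
      _ ≤ C₂ * ε ^ b₂ * ε ^ s := by
          apply mul_le_mul_of_nonneg_left h1 (by positivity)
      _ = C₂ * ε ^ (b₂+s) := by rw [mul_assoc, h2]
      _ ≤ C₂ * ε ^ b := mul_le_mul_of_nonneg_left h3 (le_of_lt hC₂)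
  calc ‖f ε x - f ε 0‖ ≤ ‖f ε x - f ε y‖ + ‖f ε y - f ε 0‖ := by
        have h := dist_triangle (f ε x) (f ε y) (f ε 0)
        simpa [dist_eq_norm] using h
    _ ≤ C₂ * ε ^ b + A₁ * 2^(d+1) * Cm * ε ^ b := add_le_add hterm2 hterm1'
    _ = (A₁ * 2^(d+1) * Cm + C₂) * ε ^ b := by ring

theorem bootstrap (u : ℝ → ℝ → ℂ)
    (hu_smooth : ∀ ε ∈ Set.Ioo (0:ℝ) 1, ContDiff ℝ (⊤ : ℕ∞) (u ε))
    (hu_mod : ∀ K : Set ℝ, IsCompact K → ∀ n : ℕ, ∃ b : ℝ, ∃ C > (0:ℝ), ∃ ε₀ > (0:ℝ),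
       ∀ ε ∈ Set.Ioo (0:ℝ) 1, ε < ε₀ → ∀ x ∈ K, ‖iteratedDeriv n (u ε) x‖ ≤ C * ε ^ b)
    (hu0 : ∀ K : Set ℝ, IsCompact K → ∀ b : ℝ, ∃ C > (0:ℝ), ∃ ε₀ > (0:ℝ),
       ∀ ε ∈ Set.Ioo (0:ℝ) 1, ε < ε₀ → ∀ x ∈ K, ‖u ε x‖ ≤ C * ε ^ b) :
    ∀ n : ℕ, ∀ K : Set ℝ, IsCompact K → ∀ b : ℝ, ∃ C > (0:ℝ), ∃ ε₀ > (0:ℝ),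
       ∀ ε ∈ Set.Ioo (0:ℝ) 1, ε < ε₀ → ∀ x ∈ K, ‖iteratedDeriv n (u ε) x‖ ≤ C * ε ^ b := by
  intro n
  induction n with
  | zero =>
    intro K hK b
    obtain ⟨C, hC, ε₀, hε₀, h⟩ := hu0 K hK b
    exact ⟨C, hC, ε₀, hε₀, by simpa [iteratedDeriv_zero] using h⟩
  | succ n ih =>
    intro K hK b
    obtain ⟨r, hr⟩ := hK.isBounded.subset_closedBall 0
    set R : ℝ := max r 1 with hRdef
    have hR1 : (1:ℝ) ≤ R := le_max_right _ _
    have hKR : K ⊆ Set.Icc (-R) R := by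
      refine hr.trans ?_
      rw [Real.closedBall_eq_Icc]
      apply Set.Icc_subset_Icc
      · simp only [zero_sub, hRdef, neg_le_neg_iff]; exact le_max_left r 1
      · simp only [zero_add, hRdef]; exact le_max_left r 1
    set K₁ : Set ℝ := Set.Icc (-(R+1)) (R+1) with hK₁def
    obtain ⟨b₂, C₂, hC₂, ε₂, hε₂, hmod2⟩ := hu_mod K₁ isCompact_Icc (n+2)
    set s : ℝ := max (b - b₂) 0 with hsdef
    have hs0 : 0 ≤ s := le_max_right _ _
    have hbb : b ≤ b₂ + s := by
      have := le_max_left (b - b₂) 0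
      simp only [hsdef]; linarith
    obtain ⟨C', hC', ε', hε', hih⟩ := ih K₁ isCompact_Icc (b + s)
    refine ⟨2*C' + C₂, by positivity, min ε' ε₂, lt_min hε' hε₂, ?_⟩
    intro ε hε hεlt x hx
    obtain ⟨hεlt', hεlt2⟩ : ε < ε' ∧ ε < ε₂ := by rw [lt_min_iff] at hεlt; tauto
    have hε0 : 0 < ε := hε.1
    have hε1 : ε < 1 := hε.2
    have hdiffm : ∀ m : ℕ, Differentiable ℝ (iteratedDeriv m (u ε)) := fun m =>
      (hu_smooth ε hε).differentiable_iteratedDeriv m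
        (by exact_mod_cast lt_top_iff_ne_top.mpr (by simp))
    set h : ℝ := ε ^ s with hhdef
    have hh0 : 0 < h := Real.rpow_pos_of_pos hε0 s
    have hh1 : h ≤ 1 := Real.rpow_le_one (le_of_lt hε0) (le_of_lt hε1) hs0
    set g : ℝ → ℂ := iteratedDeriv n (u ε) with hgdef
    set M₂ : ℝ := C₂ * ε ^ b₂ with hM₂def
    have hM₂0 : 0 ≤ M₂ := by positivity
    have hxK : x ∈ Set.Icc (-R) R := hKR hx
    have hxK₁ : x ∈ K₁ := by
      constructor
      · have := hxK.1; linarith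
      · have := hxK.2; linarith
    set g1 : ℝ → ℂ := iteratedDeriv (n+1) (u ε) with hg1def
    have hdg : deriv g = g1 := by rw [hgdef, hg1def, ← iteratedDeriv_succ]
    have hd2 : ∀ z ∈ K₁, ‖deriv g1 z‖ ≤ M₂ := by
      intro z hz
      have h1 := hmod2 ε hε hεlt2 z hz
      have h2 : deriv g1 = iteratedDeriv (n+2) (u ε) := by
        rw [hg1def, ← iteratedDeriv_succ]
      rw [h2]
      exact h1
    have hg1lip : ∀ t ∈ Set.Icc (0:ℝ) h, ‖g1 (x+t) - g1 x‖ ≤ M₂ * h := by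
      intro t ht
      have hxtK : x + t ∈ K₁ := by
        constructor
        · have h1 := hxK.1; have h2 := ht.1; linarith
        · have h1 := hxK.2; have h2 := ht.2; linarith
      have hmvt := (convex_Icc (-(R+1)) (R+1)).norm_image_sub_le_of_norm_deriv_le
        (f := g1) (fun z _ => (hdiffm (n+1)).differentiableAt) hd2 hxK₁ hxtK
      have he : ‖x + t - x‖ = t := by
        rw [show x + t - x = t by ring, Real.norm_eq_abs, abs_of_nonneg ht.1]
      rw [he] at hmvt
      calc ‖g1 (x+t) - g1 x‖ ≤ M₂ * t := hmvt
        _ ≤ M₂ * h := mul_le_mul_of_nonneg_left ht.2 hM₂0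
    -- Taylor-type estimate via the auxiliary function φ
    set φ : ℝ → ℂ := fun t => g (x+t) - g x - t • (g1 x) with hφdef
    have hφd : ∀ t : ℝ, HasDerivAt φ (g1 (x+t) - g1 x) t := by
      intro t
      have h1 : HasDerivAt (fun t : ℝ => g (x+t)) (g1 (x+t)) t := by
        have := ((hdiffm n).differentiableAt (x := x+t)).hasDerivAt.comp_const_add x t
        rwa [hdg] at this
      have h2 : HasDerivAt (fun t : ℝ => t • (g1 x)) (g1 x) t := by
        simpa using (hasDerivAt_id t).smul_const (g1 x)
      exact (h1.sub_const (g x)).sub h2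
    have hφmvt := (convex_Icc (0:ℝ) h).norm_image_sub_le_of_norm_deriv_le
      (f := φ) (fun t _ => (hφd t).differentiableAt)
      (fun t ht => by rw [(hφd t).deriv]; exact hg1lip t ht)
      (Set.left_mem_Icc.mpr (le_of_lt hh0)) (Set.right_mem_Icc.mpr (le_of_lt hh0))
    have hφ0 : φ 0 = 0 := by simp [hφdef]
    have hφh : ‖φ h‖ ≤ M₂ * h * h := by
      have : ‖φ h - φ 0‖ ≤ M₂ * h * ‖h - 0‖ := hφmvt
      rw [hφ0, sub_zero, sub_zero, Real.norm_eq_abs, abs_of_pos hh0] at this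
      exact this
    -- bound g at x and x+h via induction hypothesis
    have hxhK₁ : x + h ∈ K₁ := by
      constructor
      · have h1 := hxK.1; linarith
      · have h1 := hxK.2; linarith
    have hgx : ‖g x‖ ≤ C' * ε ^ (b+s) := hih ε hε hεlt' x hxK₁
    have hgxh : ‖g (x+h)‖ ≤ C' * ε ^ (b+s) := hih ε hε hεlt' (x+h) hxhK₁
    have key : h * ‖g1 x‖ ≤ M₂ * h * h + 2*C'*ε^(b+s) := by
      have he : (h:ℝ) • (g1 x) = (g (x+h) - g x) - φ h := by
        rw [hφdef]; ring_nf
      have h1 : ‖(h:ℝ) • (g1 x)‖ ≤ ‖g (x+h) - g x‖ + ‖φ h‖ := by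
        rw [he]; exact norm_sub_le _ _
      have h2 : ‖g (x+h) - g x‖ ≤ ‖g (x+h)‖ + ‖g x‖ := norm_sub_le _ _
      have h3 : ‖(h:ℝ) • (g1 x)‖ = h * ‖g1 x‖ := by
        rw [norm_smul, Real.norm_eq_abs, abs_of_pos hh0]
      linarith
    have hfinal : ‖g1 x‖ ≤ C₂ * ε^(b₂+s) + 2*C'*ε^b := by
      rw [← mul_le_mul_iff_right₀ hh0]
      calc h * ‖g1 x‖ ≤ M₂ * h * h + 2*C'*ε^(b+s) := key
        _ = h * (C₂ * ε^(b₂+s) + 2*C'*ε^b) := by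
            rw [hM₂def, hhdef,
              show ε^(b₂+s) = ε^b₂ * ε^s from Real.rpow_add hε0 b₂ s,
              show ε^(b+s) = ε^b * ε^s from Real.rpow_add hε0 b s]
            ring
    have hmono : ε ^ (b₂+s) ≤ ε ^ b :=
      Real.rpow_le_rpow_of_exponent_ge hε0 (le_of_lt hε1) hbb
    calc ‖iteratedDeriv (n+1) (u ε) x‖ = ‖g1 x‖ := by rw [hg1def]
      _ ≤ C₂ * ε^(b₂+s) + 2*C'*ε^b := hfinal
      _ ≤ C₂ * ε^b + 2*C'*ε^b := by
          have := mul_le_mul_of_nonneg_left hmono (le_of_lt hC₂)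
          linarith
      _ = (2*C' + C₂) * ε^b := by ring


/-- A Colombeau generalized function on `ℝ` with periods `1` and `α`, where `α` is a
positive irrational algebraic real number, is a generalized constant. -/
theorem two_periods_implies_constant (α : ℝ) (hα_pos : 0 < α)
    (hα_irr : Irrational α) (hα_alg : IsAlgebraic ℚ α)
    (f : ℝ → ℝ → ℂ)
    (hf_smooth : ∀ ε ∈ Set.Ioo (0 : ℝ) 1, ContDiff ℝ (⊤ : ℕ∞) (f ε))
    (hf_mod : Moderate f)
    (hf_per1 : Negligible (fun ε x => f ε (x + 1) - f ε x))
    (hf_perα : Negligible (fun ε x => f ε (x + α) - f ε x)) :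
    Negligible (fun ε x => f ε x - f ε 0) := by
  have hu_smooth : ∀ ε ∈ Set.Ioo (0:ℝ) 1, ContDiff ℝ (⊤ : ℕ∞) (fun x => f ε x - f ε 0) :=
    fun ε hε => (hf_smooth ε hε).sub contDiff_const
  have hu0 : ∀ K : Set ℝ, IsCompact K → ∀ b : ℝ, ∃ C > (0:ℝ), ∃ ε₀ > (0:ℝ),
      ∀ ε ∈ Set.Ioo (0:ℝ) 1, ε < ε₀ → ∀ x ∈ K, ‖f ε x - f ε 0‖ ≤ C * ε ^ b :=
    fun K hK b => neg_order0 α hα_pos hα_irr hα_alg f hf_smooth hf_mod hf_per1 hf_perα K hK b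
  have huderiv : ∀ ε : ℝ, ∀ m : ℕ,
      iteratedDeriv (m+1) (fun x => f ε x - f ε 0) = iteratedDeriv (m+1) (f ε) := by
    intro ε m
    have hd : deriv (fun x => f ε x - f ε 0) = deriv (f ε) := by
      funext z; exact deriv_sub_const (f ε 0)
    rw [iteratedDeriv_succ', iteratedDeriv_succ', hd]
  have hu_mod : ∀ K : Set ℝ, IsCompact K → ∀ n : ℕ, ∃ b : ℝ, ∃ C > (0:ℝ), ∃ ε₀ > (0:ℝ),
      ∀ ε ∈ Set.Ioo (0:ℝ) 1, ε < ε₀ → ∀ x ∈ K,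
        ‖iteratedDeriv n (fun x => f ε x - f ε 0) x‖ ≤ C * ε ^ b := by
    intro K hK n
    match n with
    | 0 =>
      obtain ⟨C, hC, ε₀, hε₀, hh⟩ := hu0 K hK 0
      exact ⟨0, C, hC, ε₀, hε₀, fun ε hε hlt x hx => by
        simpa [iteratedDeriv_zero] using hh ε hε hlt x hx⟩
    | (m+1) =>
      obtain ⟨b, C, hC, ε₀, hε₀, hh⟩ := hf_mod K hK (m+1)
      refine ⟨b, C, hC, ε₀, hε₀, fun ε hε hlt x hx => ?_⟩
      rw [huderiv ε m, ← norm_iteratedFDeriv_eq_norm_iteratedDeriv]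
      exact hh ε hε hlt x hx
  intro K hK n b
  obtain ⟨C, hC, ε₀, hε₀, hh⟩ :=
    bootstrap (fun ε x => f ε x - f ε 0) hu_smooth hu_mod hu0 n K hK b
  refine ⟨C, hC, ε₀, hε₀, fun ε hε hlt x hx => ?_⟩
  rw [norm_iteratedFDeriv_eq_norm_iteratedDeriv]
  exact hh ε hε hlt x hx
end

section
/- Let h₁, h₂ > 0 be real numbers such that h₁/h₂ is irrational and algebraic. Let (f_ε)_{ε∈(0,1)} be a moderate net of smooth functions ℝ → ℂ such that the nets (x ↦ f_ε(x + h₁) − f_ε(x))_ε and (x ↦ f_ε(x + h₂) − f_ε(x))_ε are both negligible. Then the net (x ↦ f_ε(x) − f_ε(0))_ε is negligible. -/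
set_option maxHeartbeats 1600000
open Set

lemma iteratedDeriv_const_succ (c : ℂ) (n : ℕ) (z : ℝ) :
    iteratedDeriv (n+1) (fun _ : ℝ => c) z = 0 := by
  rw [iteratedDeriv_eq_iteratedFDeriv, iteratedFDeriv_const_of_ne (by omega)]
  simp


lemma walk_bound (g : ℝ → ℂ) (a b η L U : ℝ) (ha : 0 < a) (hb : 0 < b)
    (hw : a + b ≤ U - L)
    (Ha : ∀ z, L ≤ z → z + a ≤ U → ‖g (z + a) - g z‖ ≤ η)
    (Hb : ∀ z, L ≤ z → z + b ≤ U → ‖g (z + b) - g z‖ ≤ η) :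
    ∀ n q p : ℕ, q + p = n → ∀ y, L ≤ y → y ≤ U →
      L ≤ y + q * a - p * b → y + q * a - p * b ≤ U →
      ‖g (y + q * a - p * b) - g y‖ ≤ n * η := by
  intro n
  induction n with
  | zero =>
    intro q p hqp y _ _ _ _
    obtain ⟨rfl, rfl⟩ := Nat.add_eq_zero.mp hqp
    simp
  | succ n ih =>
    intro q p hqp y hyL hyU hEL hEU
    have tri : ∀ y' : ℝ, ‖g (y + q * a - p * b) - g y'‖ ≤ n * η → ‖g y' - g y‖ ≤ η →
        ‖g (y + q * a - p * b) - g y‖ ≤ (n + 1 : ℕ) * η := by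
      intro y' h1 h2
      have h3 : g (y + q * a - p * b) - g y
          = (g (y + q * a - p * b) - g y') + (g y' - g y) := by ring
      rw [h3]
      calc ‖_ + _‖ ≤ _ + _ := norm_add_le _ _
        _ ≤ n * η + η := add_le_add h1 h2
        _ = (n + 1 : ℕ) * η := by push_cast; ring
    rcases q with _ | q'
    · -- q = 0, p = n+1
      have hp : p = n + 1 := by omega
      subst hp
      have hcast : (((n:ℕ) + 1 : ℕ) : ℝ) = (n : ℝ) + 1 := by push_cast; ring
      have hstep : ‖g (y - b) - g y‖ ≤ η := by
        have h1 : L ≤ y - b := by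
          have : (n : ℝ) * b ≥ 0 := by positivity
          have := hEL
          rw [hcast] at this
          push_cast at this ⊢
          nlinarith
        have h2 := Hb (y - b) h1 (by linarith)
        rw [sub_add_cancel] at h2
        rw [norm_sub_rev]
        exact h2
      refine tri (y - b) ?_ hstep
      have hE : y + ((0:ℕ):ℝ) * a - ((n+1 : ℕ):ℝ) * b = (y - b) + ((0:ℕ):ℝ) * a - ((n:ℕ):ℝ) * b := by
        push_cast; ring
      rw [hE]
      exact ih 0 n (by omega) (y - b)
        (by rw [hE] at hEL; push_cast at hEL ⊢; nlinarith [hb.le, Nat.cast_nonneg (α := ℝ) n])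
        (by linarith)
        (by rw [hE] at hEL; exact hEL)
        (by rw [hE] at hEU; exact hEU)
    · rcases p with _ | p'
      · -- p = 0, q = q'+1
        have hq : q' = n := by omega
        subst hq
        have hstep : ‖g (y + a) - g y‖ ≤ η := by
          refine Ha y hyL ?_
          have h4 : y + a ≤ y + ((q'+1:ℕ):ℝ) * a - ((0:ℕ):ℝ) * b := by
            push_cast
            nlinarith [ha.le, Nat.cast_nonneg (α := ℝ) q']
          linarith [hEU, h4]
        refine tri (y + a) ?_ hstep
        have hE : y + ((q'+1 : ℕ):ℝ) * a - ((0:ℕ):ℝ) * b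
            = (y + a) + ((q':ℕ):ℝ) * a - ((0:ℕ):ℝ) * b := by push_cast; ring
        rw [hE]
        refine ih q' 0 (by omega) (y + a) (by linarith) ?_ (by rw [hE] at hEL; exact hEL)
          (by rw [hE] at hEU; exact hEU)
        · rw [hE] at hEU; push_cast at hEU ⊢; nlinarith [ha.le, Nat.cast_nonneg (α := ℝ) q']
      · -- q = q'+1, p = p'+1
        by_cases hc : y + a ≤ U
        · have hstep : ‖g (y + a) - g y‖ ≤ η := Ha y hyL hc
          refine tri (y + a) ?_ hstep
          have hE : y + ((q'+1 : ℕ):ℝ) * a - ((p'+1:ℕ):ℝ) * b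
              = (y + a) + ((q':ℕ):ℝ) * a - ((p'+1:ℕ):ℝ) * b := by push_cast; ring
          rw [hE]
          exact ih q' (p'+1) (by omega) (y + a) (by linarith) hc
            (by rw [hE] at hEL; exact hEL) (by rw [hE] at hEU; exact hEU)
        · push_neg at hc
          have hyb : L ≤ y - b := by linarith
          have hstep : ‖g (y - b) - g y‖ ≤ η := by
            have h2 := Hb (y - b) hyb (by linarith)
            rw [sub_add_cancel] at h2
            rw [norm_sub_rev]
            exact h2
          refine tri (y - b) ?_ hstep
          have hE : y + ((q'+1 : ℕ):ℝ) * a - ((p'+1:ℕ):ℝ) * b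
              = (y - b) + ((q'+1:ℕ):ℝ) * a - ((p':ℕ):ℝ) * b := by push_cast; ring
          rw [hE]
          exact ih (q'+1) p' (by omega) (y - b) hyb (by linarith)
            (by rw [hE] at hEL; exact hEL) (by rw [hE] at hEU; exact hEU)


lemma alg_bound (α : ℝ) (hirr : Irrational α) (halg : IsAlgebraic ℚ α) :
    ∃ d : ℕ, 1 ≤ d ∧ ∀ j k : ℤ, 0 < j → 1 / (2^d * (j:ℝ)^(d-1)) ≤ |j * α - k| := by
  have halgZ : IsAlgebraic ℤ α := (IsFractionRing.isAlgebraic_iff ℤ ℚ ℝ).mpr halg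
  have hnL : ¬ Liouville α := fun hL => hL.transcendental halgZ
  rw [Liouville] at hnL; push_neg at hnL
  obtain ⟨d0, hd0⟩ := hnL
  refine ⟨max d0 1, le_max_right _ _, ?_⟩
  set d := max d0 1 with hdd
  intro j k hj
  have hj0 : (0:ℝ) < (j:ℝ) := by exact_mod_cast hj
  have h2j : (1:ℤ) < 2 * j := by omega
  have hne : α ≠ (2*k : ℤ) / ((2*j : ℤ) : ℝ) := by
    intro heq
    refine hirr ⟨(2*k : ℚ)/(2*j : ℚ), ?_⟩
    push_cast
    push_cast at heq
    linarith [heq]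
  have hkey := hd0 (2*k) (2*j) h2j hne
  have h2jR : (1:ℝ) ≤ ((2*j : ℤ) : ℝ) := by exact_mod_cast h2j.le
  have hmono : ((2*j:ℤ):ℝ) ^ d0 ≤ ((2*j:ℤ):ℝ) ^ d :=
    pow_le_pow_right₀ h2jR (le_max_left _ _)
  have h2jpos : (0:ℝ) < ((2*j:ℤ):ℝ) ^ d := by positivity
  have hkey2 : 1 / ((2*j:ℤ):ℝ) ^ d ≤ |α - (2*k:ℤ) / ((2*j:ℤ):ℝ)| := by
    refine le_trans ?_ hkey
    apply one_div_le_one_div_of_le (by positivity) hmono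
  have hfrac : ((2*k:ℤ):ℝ) / ((2*j:ℤ):ℝ) = (k:ℝ)/(j:ℝ) := by
    push_cast
    rw [mul_div_mul_left _ _ (two_ne_zero)]
  rw [hfrac] at hkey2
  have habs : |(j:ℝ) * α - k| = (j:ℝ) * |α - (k:ℝ)/(j:ℝ)| := by
    have h5 : (j:ℝ) * α - k = (j:ℝ) * (α - (k:ℝ)/(j:ℝ)) := by field_simp
    rw [h5, abs_mul, abs_of_pos hj0]
  rw [habs]
  have hdpos : 0 < d := lt_of_lt_of_le one_pos (le_max_right _ _)
  have hd1 : d - 1 + 1 = d := Nat.succ_pred_eq_of_pos hdpos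
  have hpow : ((2*j:ℤ):ℝ)^d = 2^d * (j:ℝ)^(d-1) * (j:ℝ) := by
    push_cast
    rw [mul_pow, mul_assoc]
    congr 1
    rw [← pow_succ, hd1]
  calc 1 / (2^d * (j:ℝ)^(d-1)) = (j:ℝ) * (1 / ((2*j:ℤ):ℝ)^d) := by
        rw [hpow]; field_simp
    _ ≤ (j:ℝ) * |α - (k:ℝ)/(j:ℝ)| := by
        exact mul_le_mul_of_nonneg_left hkey2 hj0.le


lemma contDiff_shift (u : ℝ → ℂ) (hu : ContDiff ℝ ((⊤ : ℕ∞) : WithTop ℕ∞) u) (h : ℝ) :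
    ContDiff ℝ ((⊤ : ℕ∞) : WithTop ℕ∞) (fun x => u (x + h)) :=
  hu.comp (contDiff_id.add contDiff_const)

lemma iteratedDeriv_sub' {n : ℕ} {u v : ℝ → ℂ} (hu : ContDiff ℝ ((⊤ : ℕ∞) : WithTop ℕ∞) u) (hv : ContDiff ℝ ((⊤ : ℕ∞) : WithTop ℕ∞) v)
    (z : ℝ) :
    iteratedDeriv n (fun x => u x - v x) z = iteratedDeriv n u z - iteratedDeriv n v z := by
  have key : iteratedFDeriv ℝ n (fun x => u x - v x) z
      = iteratedFDeriv ℝ n u z - iteratedFDeriv ℝ n v z := by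
    have h1 : (fun x => u x - v x) = u + (-v) := by funext x; simp [sub_eq_add_neg]
    rw [h1, iteratedFDeriv_add_apply (f := u) (g := -v) (hu.contDiffAt.of_le (by exact_mod_cast le_top)) ((hv.neg).contDiffAt.of_le (by exact_mod_cast le_top)),
      iteratedFDeriv_neg_apply, ← sub_eq_add_neg]
  rw [iteratedDeriv_eq_iteratedFDeriv, iteratedDeriv_eq_iteratedFDeriv,
    iteratedDeriv_eq_iteratedFDeriv, key]
  simp

lemma iteratedDeriv_smooth (u : ℝ → ℂ) (hu : ContDiff ℝ ((⊤ : ℕ∞) : WithTop ℕ∞) u) (n : ℕ) :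
    ContDiff ℝ ((⊤ : ℕ∞) : WithTop ℕ∞) (iteratedDeriv n u) := by
  rw [iteratedDeriv_eq_iterate]
  exact ContDiff.iterate_deriv n hu

lemma periodDiff (u : ℝ → ℂ) (hu : ContDiff ℝ ((⊤ : ℕ∞) : WithTop ℕ∞) u) (h : ℝ) (n : ℕ) (z : ℝ) :
    iteratedDeriv n u (z + h) - iteratedDeriv n u z
      = iteratedDeriv n (fun x => u (x + h) - u x) z := by
  rw [iteratedDeriv_sub' (contDiff_shift u hu h) hu z]
  rw [congrFun (iteratedDeriv_comp_add_const n u h) z]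



lemma core_est (h₁ h₂ : ℝ) (hh₁ : 0 < h₁) (hh₂ : 0 < h₂) (α : ℝ) (hα : α = h₁ / h₂)
    (hirr : Irrational α) (d : ℕ)
    (hdio : ∀ j k : ℤ, 0 < j → 1 / (2^d * (j:ℝ)^(d-1)) ≤ |j * α - k|)
    (g : ℝ → ℂ) (hg : ContDiff ℝ ((⊤ : ℕ∞) : WithTop ℕ∞) g)
    (R : ℝ) (hR : 0 ≤ R)
    (L U : ℝ) (hL : L = -(R + h₁ + h₂ + 1)) (hU : U = R + h₁ + h₂ + 1)
    (η δ Cd : ℝ) (hδ : 0 < δ) (hCd : 0 ≤ Cd) (hη : 0 ≤ η)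
    (Hd : ∀ z ∈ Set.Icc L U, ‖deriv g z‖ ≤ Cd)
    (Ha : ∀ z, L ≤ z → z + h₁ ≤ U → ‖g (z + h₁) - g z‖ ≤ η)
    (Hb : ∀ z, L ≤ z → z + h₂ ≤ U → ‖g (z + h₂) - g z‖ ≤ η)
    (N : ℕ) (hN : 1 ≤ N) (hNδ : 1/δ ≤ (N:ℝ))
    (x : ℝ) (hx : |x| ≤ R) :
    ‖g x - g 0‖ ≤ (R * 2^d * (N:ℝ)^(d-1) / h₂ + 1) * ((N:ℝ)*(α+2)) * η + Cd * (h₂ * δ) := by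
  have hαpos : 0 < α := by rw [hα]; positivity
  have hNpos : (0:ℝ) < (N:ℝ) := by exact_mod_cast hN
  obtain ⟨num, mult, hmult0, hmultN, happrox⟩ :=
    Real.exists_int_int_abs_mul_sub_le α (show 0 < N by omega)
  have hmultR : (0:ℝ) < (mult:ℝ) := by exact_mod_cast hmult0
  have hmultNR : (mult:ℝ) ≤ (N:ℝ) := by exact_mod_cast hmultN
  set θ : ℝ := mult * h₁ - num * h₂ with hθdef
  have hθeq : θ = h₂ * (mult * α - num) := by
    rw [hα]; field_simp; ring
  -- θ ≠ 0
  have hne0 : (mult:ℝ) * α - num ≠ 0 := by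
    intro heq
    have hmne : (mult:ℝ) ≠ 0 := ne_of_gt hmultR
    have hαval : α = (num:ℝ)/(mult:ℝ) := by field_simp; linarith
    refine hirr ⟨(num:ℚ)/(mult:ℚ), ?_⟩
    rw [hαval]; push_cast; ring
  have hθpos : 0 < |θ| := by
    rw [hθeq, abs_mul, abs_of_pos hh₂]
    exact mul_pos hh₂ (abs_pos.mpr hne0)
  -- lower bound for |θ|
  have hdio1 := hdio mult num hmult0
  have hmono : (1:ℝ) / (2^d * (N:ℝ)^(d-1)) ≤ 1 / (2^d * (mult:ℝ)^(d-1)) := by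
    apply one_div_le_one_div_of_le (by positivity)
    exact mul_le_mul_of_nonneg_left (pow_le_pow_left₀ hmultR.le hmultNR (d-1)) (by positivity)
  have hθlow : h₂ / (2^d * (N:ℝ)^(d-1)) ≤ |θ| := by
    rw [hθeq, abs_mul, abs_of_pos hh₂]
    rw [div_eq_mul_one_div]
    exact mul_le_mul_of_nonneg_left (hmono.trans hdio1) hh₂.le
  -- upper bound for |θ|
  have hθup : |θ| ≤ h₂ * δ := by
    rw [hθeq, abs_mul, abs_of_pos hh₂]
    refine mul_le_mul_of_nonneg_left ?_ hh₂.le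
    refine happrox.trans ?_
    have h1 : (1:ℝ)/δ ≤ (N:ℝ) + 1 := by linarith
    rw [div_le_iff₀ (by positivity)] at h1 ⊢
    · linarith [h1]
  -- num bounds
  have happ1 : |(mult:ℝ) * α - num| ≤ 1 := by
    refine happrox.trans ?_
    rw [div_le_one (by positivity)]; linarith
  have hnum0 : 0 ≤ num := by
    by_contra hcon
    push_neg at hcon
    have : (num:ℝ) ≤ -1 := by exact_mod_cast Int.le_sub_one_of_lt hcon
    have h2 : (mult:ℝ) * α > 0 := by positivity
    have := abs_le.mp happ1
    linarith [this.2]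
  have hnumR : (num:ℝ) ≤ (N:ℝ)*α + 1 := by
    have h6 := (abs_le.mp happ1).1
    have h7 : (mult:ℝ)*α ≤ (N:ℝ)*α := mul_le_mul_of_nonneg_right hmultNR hαpos.le
    linarith
  -- the number of steps
  set m : ℕ := ⌊|x| / |θ|⌋₊ with hmdef
  have hm1 : (m:ℝ) ≤ |x| / |θ| := Nat.floor_le (by positivity)
  have hm2 : |x| / |θ| < (m:ℝ) + 1 := Nat.lt_floor_add_one _
  have hmθ : (m:ℝ) * |θ| ≤ |x| := by
    rw [← le_div_iff₀ hθpos]; exact hm1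
  have hxmθ : |x| - (m:ℝ) * |θ| ≤ h₂ * δ := by
    rw [div_lt_iff₀ hθpos] at hm2
    have : ((m:ℝ)+1) * |θ| = (m:ℝ)*|θ| + |θ| := by ring
    rw [this] at hm2
    linarith [hθup]
  have hmbound : (m:ℝ) ≤ R * 2^d * (N:ℝ)^(d-1) / h₂ := by
    refine hm1.trans ?_
    rw [div_le_div_iff₀ hθpos hh₂]
    calc |x| * h₂ ≤ R * h₂ := mul_le_mul_of_nonneg_right hx hh₂.le
      _ = (R * 2^d * (N:ℝ)^(d-1)) * (h₂ / (2^d * (N:ℝ)^(d-1))) := by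
          field_simp
      _ ≤ (R * 2^d * (N:ℝ)^(d-1)) * |θ| := by
          refine mul_le_mul_of_nonneg_left hθlow (by positivity)
  -- cast facts
  have hmultcast : ((mult.toNat : ℕ) : ℝ) = (mult : ℝ) := by
    exact_mod_cast congrArg (Int.cast : ℤ → ℝ) (Int.toNat_of_nonneg hmult0.le)
  have hnumcast : ((num.toNat : ℕ) : ℝ) = (num : ℝ) := by
    exact_mod_cast congrArg (Int.cast : ℤ → ℝ) (Int.toNat_of_nonneg hnum0)
  have hwidth : h₁ + h₂ ≤ U - L := by rw [hU, hL]; linarith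
  have hL0 : L ≤ 0 := by rw [hL]; linarith
  have hU0 : 0 ≤ U := by rw [hU]; linarith
  set S : ℕ := m * (mult.toNat + num.toNat) with hSdef
  -- two walk forms
  have walkA : L ≤ (m:ℝ)*θ → (m:ℝ)*θ ≤ U → ‖g ((m:ℝ)*θ) - g 0‖ ≤ (S:ℝ) * η := by
    intro hl hu
    have hEeq : (m:ℝ)*θ = 0 + ((m * mult.toNat : ℕ):ℝ) * h₁ - ((m * num.toNat : ℕ):ℝ) * h₂ := by
      push_cast [hmultcast, hnumcast]
      rw [hθdef]; push_cast; ring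
    have := walk_bound g h₁ h₂ η L U hh₁ hh₂ hwidth Ha Hb S (m * mult.toNat) (m * num.toNat)
      (by rw [hSdef]; ring) 0 hL0 hU0 (by rw [← hEeq]; exact hl) (by rw [← hEeq]; exact hu)
    rw [← hEeq] at this
    exact this
  have walkB : L ≤ -((m:ℝ)*θ) → -((m:ℝ)*θ) ≤ U → ‖g (-((m:ℝ)*θ)) - g 0‖ ≤ (S:ℝ) * η := by
    intro hl hu
    have hEeq : -((m:ℝ)*θ) = 0 + ((m * num.toNat : ℕ):ℝ) * h₂ - ((m * mult.toNat : ℕ):ℝ) * h₁ := by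
      push_cast [hmultcast, hnumcast]
      rw [hθdef]; push_cast; ring
    have := walk_bound g h₂ h₁ η L U hh₂ hh₁ (by linarith) Hb Ha S (m * num.toNat) (m * mult.toNat)
      (by rw [hSdef]; ring) 0 hL0 hU0 (by rw [← hEeq]; exact hl) (by rw [← hEeq]; exact hu)
    rw [← hEeq] at this
    exact this
  -- define t
  set T : ℝ := (m:ℝ) * |θ| with hTdef
  have hT0 : 0 ≤ T := by positivity
  have hTR : T ≤ R := le_trans hmθ hx
  set t : ℝ := if 0 ≤ x then T else -T with htdef
  have htabs : |t| ≤ R := by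
    rw [htdef]
    split
    · rwa [abs_of_nonneg hT0]
    · rwa [abs_neg, abs_of_nonneg hT0]
  have htL : L ≤ t := by rw [hL]; cases abs_le.mp htabs; linarith
  have htU : t ≤ U := by rw [hU]; cases abs_le.mp htabs; linarith
  have hxL : L ≤ x := by rw [hL]; cases abs_le.mp hx; linarith
  have hxU : x ≤ U := by rw [hU]; cases abs_le.mp hx; linarith
  -- walk bound for t
  have hwalk : ‖g t - g 0‖ ≤ (S:ℝ) * η := by
    rw [htdef]
    rcases le_or_gt 0 x with hx0 | hx0 <;> rcases le_or_gt 0 θ with hθ0 | hθ0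
    · -- t = T = m θ
      simp only [if_pos hx0]
      have hTθ : T = (m:ℝ)*θ := by rw [hTdef, abs_of_nonneg hθ0]
      rw [hTθ]
      exact walkA (by rw [← hTθ]; linarith) (by rw [← hTθ]; linarith)
    · -- t = T = -(mθ)
      simp only [if_pos hx0]
      have hTθ : T = -((m:ℝ)*θ) := by rw [hTdef, abs_of_neg hθ0]; ring
      rw [hTθ]
      exact walkB (by rw [← hTθ]; linarith) (by rw [← hTθ]; linarith)
    · -- t = -T = -(mθ)
      simp only [if_neg (not_le.mpr hx0)]
      have hTθ : -T = -((m:ℝ)*θ) := by rw [hTdef, abs_of_nonneg hθ0]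
      rw [hTθ]
      exact walkB (by rw [← hTθ]; linarith) (by rw [← hTθ]; linarith)
    · -- t = -T = mθ
      simp only [if_neg (not_le.mpr hx0)]
      have hTθ : -T = (m:ℝ)*θ := by rw [hTdef, abs_of_neg hθ0]; ring
      rw [hTθ]
      exact walkA (by rw [← hTθ]; linarith) (by rw [← hTθ]; linarith)
  -- derivative bound for |g x - g t|
  have hder : ‖g x - g t‖ ≤ Cd * (h₂ * δ) := by
    have hmvt := Convex.norm_image_sub_le_of_norm_hasDerivWithin_le
      (f := g) (f' := fun z => deriv g z) (s := Set.Icc L U) (C := Cd)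
      (fun z _ => ((hg.differentiable (by simp)) z).hasDerivAt.hasDerivWithinAt)
      (fun z hz => Hd z hz) (convex_Icc L U) ⟨htL, htU⟩ ⟨hxL, hxU⟩
    refine hmvt.trans ?_
    refine mul_le_mul_of_nonneg_left ?_ hCd
    have hxt : ‖x - t‖ = |x| - T := by
      rw [htdef, Real.norm_eq_abs]
      rcases le_or_gt 0 x with hx0 | hx0
      · rw [if_pos hx0]
        rw [abs_of_nonneg hx0] at hmθ
        rw [abs_of_nonneg (by linarith : (0:ℝ) ≤ x - T), abs_of_nonneg hx0]
      · rw [if_neg (not_le.mpr hx0)]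
        rw [abs_of_neg hx0] at hmθ
        have h9 : x - -T = -(-x - T) := by ring
        rw [h9, abs_neg, abs_of_nonneg (by linarith : (0:ℝ) ≤ -x - T), abs_of_neg hx0]
    rw [hxt]
    linarith [hxmθ]
  -- total
  have htot : g x - g 0 = (g x - g t) + (g t - g 0) := by ring
  rw [htot]
  refine (norm_add_le _ _).trans ?_
  have hS : (S:ℝ) ≤ (R * 2^d * (N:ℝ)^(d-1) / h₂ + 1) * ((N:ℝ)*(α+2)) := by
    have hScast : (S:ℝ) = (m:ℝ) * ((mult:ℝ) + (num:ℝ)) := by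
      rw [hSdef]; push_cast [hmultcast, hnumcast]; ring
    rw [hScast]
    have hnum0R : (0:ℝ) ≤ (num:ℝ) := by exact_mod_cast hnum0
    have hN1R : (1:ℝ) ≤ (N:ℝ) := by exact_mod_cast hN
    have h1 : (mult:ℝ) + num ≤ (N:ℝ)*(α+2) := by
      have : (N:ℝ)*(α+2) = (N:ℝ)*α + 2*(N:ℝ) := by ring
      rw [this]; linarith
    have h2 : (m:ℝ) ≤ R * 2^d * (N:ℝ)^(d-1) / h₂ + 1 := by linarith
    have h3 : (0:ℝ) ≤ (mult:ℝ) + num := by linarith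
    exact mul_le_mul h2 h1 h3 (by positivity)
  calc ‖g x - g t‖ + ‖g t - g 0‖ ≤ Cd * (h₂ * δ) + (S:ℝ) * η := add_le_add hder hwalk
    _ ≤ Cd * (h₂ * δ) + (R * 2^d * (N:ℝ)^(d-1) / h₂ + 1) * ((N:ℝ)*(α+2)) * η := by
        have := mul_le_mul_of_nonneg_right hS hη
        linarith
    _ = _ := by ring

/-- A Colombeau generalized function on `ℝ` with periods `h₁` and `h₂` whose ratio is a
positive irrational algebraic real number is a generalized constant. -/
theorem two_periods_algebraic_ratio_implies_constant (h₁ h₂ : ℝ)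
    (hh₁ : 0 < h₁) (hh₂ : 0 < h₂)
    (hratio_irr : Irrational (h₁ / h₂)) (hratio_alg : IsAlgebraic ℚ (h₁ / h₂))
    (f : ℝ → ℝ → ℂ)
    (hf_smooth : ∀ ε ∈ Set.Ioo (0 : ℝ) 1, ContDiff ℝ (⊤ : ℕ∞) (f ε))
    (hf_mod : Moderate f)
    (hf_per1 : Negligible (fun ε x => f ε (x + h₁) - f ε x))
    (hf_per2 : Negligible (fun ε x => f ε (x + h₂) - f ε x)) :
    Negligible (fun ε x => f ε x - f ε 0) := by
  set α : ℝ := h₁ / h₂ with hαdef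
  have hαpos : 0 < α := div_pos hh₁ hh₂
  obtain ⟨d, hd1, hdio⟩ := alg_bound α hratio_irr hratio_alg
  have hsm : ∀ ε ∈ Set.Ioo (0:ℝ) 1, ContDiff ℝ ((⊤ : ℕ∞) : WithTop ℕ∞) (f ε) :=
    fun ε hε => (hf_smooth ε hε).of_le (by simp)
  -- Moderateness, formulated for iterated derivatives
  have hmod' : ∀ K : Set ℝ, IsCompact K → ∀ n : ℕ, ∃ b : ℝ, ∃ C > (0:ℝ), ∃ ε₀ > (0:ℝ),
      ∀ ε ∈ Set.Ioo (0:ℝ) 1, ε < ε₀ → ∀ x ∈ K, ‖iteratedDeriv n (f ε) x‖ ≤ C * ε ^ b := by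
    intro K hK n
    obtain ⟨b, C, hC, ε₀, hε₀, hbound⟩ := hf_mod K hK n
    refine ⟨b, C, hC, ε₀, hε₀, fun ε hε hεlt x hx => ?_⟩
    rw [← norm_iteratedFDeriv_eq_norm_iteratedDeriv]
    exact hbound ε hε hεlt x hx
  -- Negligibility of period differences, formulated for iterated derivatives
  have hper' : ∀ h : ℝ, Negligible (fun ε x => f ε (x + h) - f ε x) →
      ∀ K : Set ℝ, IsCompact K → ∀ n : ℕ, ∀ b : ℝ, ∃ C > (0:ℝ), ∃ ε₀ > (0:ℝ),
        ∀ ε ∈ Set.Ioo (0:ℝ) 1, ε < ε₀ → ∀ z ∈ K,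
          ‖iteratedDeriv n (f ε) (z + h) - iteratedDeriv n (f ε) z‖ ≤ C * ε ^ b := by
    intro h hneg K hK n b
    obtain ⟨C, hC, ε₀, hε₀, hbound⟩ := hneg K hK n b
    refine ⟨C, hC, ε₀, hε₀, fun ε hε hεlt z hz => ?_⟩
    rw [periodDiff (f ε) (hsm ε hε) h n z, ← norm_iteratedFDeriv_eq_norm_iteratedDeriv]
    exact hbound ε hε hεlt z hz
  -- Main estimate: differences to the value at 0 of any iterated derivative are negligible
  have D : ∀ n : ℕ, ∀ K : Set ℝ, IsCompact K → ∀ b : ℝ, ∃ C > (0:ℝ), ∃ ε₀ > (0:ℝ),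
      ∀ ε ∈ Set.Ioo (0:ℝ) 1, ε < ε₀ → ∀ x ∈ K,
        ‖iteratedDeriv n (f ε) x - iteratedDeriv n (f ε) 0‖ ≤ C * ε ^ b := by
    intro n K hK b
    obtain ⟨r, hr⟩ := hK.isBounded.subset_closedBall 0
    set R : ℝ := max r 0 with hRdef
    have hR : 0 ≤ R := le_max_right _ _
    have hKR : ∀ x ∈ K, |x| ≤ R := by
      intro x hx
      have h1 := hr hx
      rw [Metric.mem_closedBall, Real.dist_eq, sub_zero] at h1
      exact h1.trans (le_max_left _ _)
    set L : ℝ := -(R + h₁ + h₂ + 1) with hLdef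
    set U : ℝ := R + h₁ + h₂ + 1 with hUdef
    obtain ⟨b₁, C₁, hC₁, ε₁, hε₁, hmod1⟩ := hmod' (Icc L U) isCompact_Icc (n+1)
    set M : ℕ := 1 + ⌈|b| + |b₁|⌉₊ with hMdef
    have hMb : b ≤ b₁ + M := by
      have h1 : |b| + |b₁| ≤ (⌈|b| + |b₁|⌉₊ : ℝ) := Nat.le_ceil _
      have h2 : ((⌈|b| + |b₁|⌉₊ : ℕ) : ℝ) ≤ (M : ℝ) := by
        rw [hMdef]; push_cast; linarith
      have h3 := le_abs_self b
      have h4 := neg_abs_le b₁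
      linarith
    set β : ℝ := b + (M:ℝ)*(d:ℝ) with hβdef
    obtain ⟨C₂, hC₂, ε₂, hε₂, hper1b⟩ := hper' h₁ hf_per1 (Icc L U) isCompact_Icc n β
    obtain ⟨C₃, hC₃, ε₃, hε₃, hper2b⟩ := hper' h₂ hf_per2 (Icc L U) isCompact_Icc n β
    set A : ℝ := (R * 2^d * 2^(d-1) / h₂ + 1) * (2*(α+2)) with hAdef
    have hApos : 0 < A := by
      rw [hAdef]
      have : (0:ℝ) < α + 2 := by linarith
      positivity
    refine ⟨A * (C₂ + C₃) + C₁ * h₂, by positivity, min ε₁ (min ε₂ ε₃), by positivity, ?_⟩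
    intro ε hε hεlt x hx
    have hε0 : 0 < ε := hε.1
    have hε1' : ε < 1 := hε.2
    have hεb1 : ε < ε₁ := lt_of_lt_of_le hεlt (min_le_left _ _)
    have hεb2 : ε < ε₂ := lt_of_lt_of_le hεlt ((min_le_right _ _).trans (min_le_left _ _))
    have hεb3 : ε < ε₃ := lt_of_lt_of_le hεlt ((min_le_right _ _).trans (min_le_right _ _))
    set δ : ℝ := ε ^ (M:ℝ) with hδdef
    have hδpos : 0 < δ := Real.rpow_pos_of_pos hε0 _
    have hδ1 : δ ≤ 1 := Real.rpow_le_one hε0.le hε1'.le (Nat.cast_nonneg M)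
    have hinv1 : 1 ≤ 1/δ := by rw [le_div_iff₀ hδpos, one_mul]; exact hδ1
    set N : ℕ := ⌈1/δ⌉₊ with hNdef
    have hN1 : 1 ≤ N := by
      rw [hNdef]
      exact Nat.one_le_ceil_iff.mpr (by linarith)
    have hNδ : 1/δ ≤ (N:ℝ) := Nat.le_ceil _
    have hN2 : (N:ℝ) ≤ 2*(1/δ) := by
      have h1 : ((N:ℕ):ℝ) < 1/δ + 1 := Nat.ceil_lt_add_one (by positivity)
      linarith
    -- the three input bounds for core_est
    set η : ℝ := (C₂ + C₃) * ε ^ β with hηdef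
    have hηpos : 0 < η := by rw [hηdef]; positivity
    set Cd : ℝ := C₁ * ε ^ b₁ with hCddef
    have hCdpos : 0 < Cd := by rw [hCddef]; positivity
    have Hd : ∀ z ∈ Icc L U, ‖deriv (iteratedDeriv n (f ε)) z‖ ≤ Cd := by
      intro z hz
      rw [← iteratedDeriv_succ]
      exact hmod1 ε hε hεb1 z hz
    have Ha : ∀ z, L ≤ z → z + h₁ ≤ U → ‖iteratedDeriv n (f ε) (z + h₁) - iteratedDeriv n (f ε) z‖ ≤ η := by
      intro z h1 h2
      have hzmem : z ∈ Icc L U := ⟨h1, by linarith⟩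
      refine (hper1b ε hε hεb2 z hzmem).trans ?_
      rw [hηdef]
      have : (0:ℝ) ≤ C₃ * ε ^ β := by positivity
      nlinarith [Real.rpow_pos_of_pos hε0 β]
    have Hb : ∀ z, L ≤ z → z + h₂ ≤ U → ‖iteratedDeriv n (f ε) (z + h₂) - iteratedDeriv n (f ε) z‖ ≤ η := by
      intro z h1 h2
      have hzmem : z ∈ Icc L U := ⟨h1, by linarith⟩
      refine (hper2b ε hε hεb3 z hzmem).trans ?_
      rw [hηdef]
      have : (0:ℝ) ≤ C₂ * ε ^ β := by positivity
      nlinarith [Real.rpow_pos_of_pos hε0 β]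
    have hcore := core_est h₁ h₂ hh₁ hh₂ α hαdef hratio_irr d hdio
      (iteratedDeriv n (f ε)) (iteratedDeriv_smooth (f ε) (hsm ε hε) n)
      R hR L U hLdef hUdef η δ Cd hδpos hCdpos.le hηpos.le Hd Ha Hb
      N hN1 hNδ x (hKR x hx)
    refine hcore.trans ?_
    -- now estimate the right-hand side
    have hterm2 : Cd * (h₂ * δ) ≤ C₁ * h₂ * ε ^ b := by
      rw [hCddef, hδdef]
      have h1 : ε ^ b₁ * ε ^ ((M:ℕ):ℝ) = ε ^ (b₁ + (M:ℝ)) := (Real.rpow_add hε0 _ _).symm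
      have h2 : ε ^ (b₁ + (M:ℝ)) ≤ ε ^ b :=
        Real.rpow_le_rpow_of_exponent_ge hε0 hε1'.le hMb
      calc C₁ * ε ^ b₁ * (h₂ * ε ^ ((M:ℕ):ℝ)) = C₁ * h₂ * (ε ^ b₁ * ε ^ ((M:ℕ):ℝ)) := by ring
        _ = C₁ * h₂ * ε ^ (b₁ + (M:ℝ)) := by rw [h1]
        _ ≤ C₁ * h₂ * ε ^ b := by
            exact mul_le_mul_of_nonneg_left h2 (by positivity)
    have hterm1 : (R * 2^d * (N:ℝ)^(d-1) / h₂ + 1) * ((N:ℝ)*(α+2)) * η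
        ≤ A * (C₂ + C₃) * ε ^ b := by
      set P : ℝ := 1/δ with hPdef
      have hPpos : 0 < P := by positivity
      have hP1 : 1 ≤ P := hinv1
      have hP1d : 1 ≤ P^(d-1) := one_le_pow₀ hP1
      have e1 : (N:ℝ)^(d-1) ≤ (2*P)^(d-1) := pow_le_pow_left₀ (Nat.cast_nonneg N) hN2 _
      have e2 : (2*P)^(d-1) = 2^(d-1)*P^(d-1) := mul_pow _ _ _
      have f1 : R * 2^d * (N:ℝ)^(d-1) / h₂ + 1 ≤ (R*2^d*2^(d-1)/h₂ + 1) * P^(d-1) := by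
        have hQ : (0:ℝ) ≤ R * 2^d / h₂ := by positivity
        have h1 : R * 2^d * (N:ℝ)^(d-1) / h₂ = (R * 2^d / h₂) * (N:ℝ)^(d-1) := by ring
        have h2 : (R * 2^d / h₂) * (N:ℝ)^(d-1) ≤ (R * 2^d / h₂) * (2^(d-1)*P^(d-1)) :=
          mul_le_mul_of_nonneg_left (e1.trans_eq e2) hQ
        have h3 : (R*2^d*2^(d-1)/h₂ + 1) * P^(d-1) = (R * 2^d / h₂) * (2^(d-1)*P^(d-1)) + P^(d-1) := by
          ring
        rw [h1, h3]
        linarith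
      have f2 : (N:ℝ)*(α+2) ≤ (2*(α+2))*P := by
        have h1 := mul_le_mul_of_nonneg_right hN2 (show (0:ℝ) ≤ α+2 by linarith)
        calc (N:ℝ)*(α+2) ≤ 2*P*(α+2) := h1
          _ = (2*(α+2))*P := by ring
      have f3 : (R * 2^d * (N:ℝ)^(d-1) / h₂ + 1) * ((N:ℝ)*(α+2))
          ≤ A * (P^(d-1) * P) := by
        have h4 := mul_le_mul f1 f2 (by positivity) (by positivity)
        calc (R * 2^d * (N:ℝ)^(d-1) / h₂ + 1) * ((N:ℝ)*(α+2))
            ≤ ((R*2^d*2^(d-1)/h₂ + 1) * P^(d-1)) * ((2*(α+2))*P) := h4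
          _ = A * (P^(d-1) * P) := by rw [hAdef]; ring
      have f4 : P^(d-1) * P = P^d := by
        rw [← pow_succ]
        congr 1
        omega
      have f5 : P^d * ε ^ β = ε ^ b := by
        have h5 : P = ε ^ (-(M:ℝ)) := by
          rw [hPdef, hδdef, one_div, ← Real.rpow_neg hε0.le]
        rw [h5, ← Real.rpow_natCast (ε ^ (-(M:ℝ))) d, ← Real.rpow_mul hε0.le,
          ← Real.rpow_add hε0]
        congr 1
        rw [hβdef]
        ring
      calc (R * 2^d * (N:ℝ)^(d-1) / h₂ + 1) * ((N:ℝ)*(α+2)) * η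
          ≤ (A * (P^(d-1) * P)) * η := mul_le_mul_of_nonneg_right f3 hηpos.le
        _ = A * (C₂ + C₃) * (P^d * ε ^ β) := by rw [f4, hηdef]; ring
        _ = A * (C₂ + C₃) * ε ^ b := by rw [f5]
    calc (R * 2^d * (N:ℝ)^(d-1) / h₂ + 1) * ((N:ℝ)*(α+2)) * η + Cd * (h₂ * δ)
        ≤ A * (C₂ + C₃) * ε ^ b + C₁ * h₂ * ε ^ b := add_le_add hterm1 hterm2
      _ = (A * (C₂ + C₃) + C₁ * h₂) * ε ^ b := by ring
  -- Interpolation: the iterated derivatives of positive order are themselves negligible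
  have Astep : ∀ n : ℕ, ∀ K : Set ℝ, IsCompact K → ∀ b : ℝ, ∃ C > (0:ℝ), ∃ ε₀ > (0:ℝ),
      ∀ ε ∈ Set.Ioo (0:ℝ) 1, ε < ε₀ → ∀ x ∈ K,
        ‖iteratedDeriv (n+1) (f ε) x‖ ≤ C * ε ^ b := by
    intro n K hK b
    obtain ⟨r, hr⟩ := hK.isBounded.subset_closedBall 0
    set R : ℝ := max r 0 with hRdef
    have hR : 0 ≤ R := le_max_right _ _
    have hKR : ∀ x ∈ K, |x| ≤ R := by
      intro x hx
      have h1 := hr hx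
      rw [Metric.mem_closedBall, Real.dist_eq, sub_zero] at h1
      exact h1.trans (le_max_left _ _)
    obtain ⟨b₁, C₁, hC₁, ε₁, hε₁, hmod1⟩ := hmod' (Icc (-(R+1)) (R+1)) isCompact_Icc (n+2)
    set M : ℕ := 1 + ⌈|b| + |b₁|⌉₊ with hMdef
    have hMb : b ≤ b₁ + M := by
      have h1 : |b| + |b₁| ≤ (⌈|b| + |b₁|⌉₊ : ℝ) := Nat.le_ceil _
      have h2 : ((⌈|b| + |b₁|⌉₊ : ℕ) : ℝ) ≤ (M : ℝ) := by
        rw [hMdef]; push_cast; linarith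
      have h3 := le_abs_self b
      have h4 := neg_abs_le b₁
      linarith
    obtain ⟨C₂, hC₂, ε₂, hε₂, hDb⟩ := D n (Icc (-(R+1)) (R+1)) isCompact_Icc (b + (M:ℝ))
    refine ⟨C₁ + 2*C₂, by positivity, min ε₁ ε₂, by positivity, ?_⟩
    intro ε hε hεlt x hx
    have hε0 : 0 < ε := hε.1
    have hε1' : ε < 1 := hε.2
    have hεb1 : ε < ε₁ := lt_of_lt_of_le hεlt (min_le_left _ _)
    have hεb2 : ε < ε₂ := lt_of_lt_of_le hεlt (min_le_right _ _)
    set δ : ℝ := ε ^ (M:ℝ) with hδdef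
    have hδpos : 0 < δ := Real.rpow_pos_of_pos hε0 _
    have hδ1 : δ ≤ 1 := Real.rpow_le_one hε0.le hε1'.le (Nat.cast_nonneg M)
    have hxicc : x ∈ Icc (-(R+1)) (R+1) := by
      have := abs_le.mp (hKR x hx)
      exact ⟨by linarith [this.1], by linarith [this.2]⟩
    have hxdicc : x + δ ∈ Icc (-(R+1)) (R+1) := by
      have := abs_le.mp (hKR x hx)
      exact ⟨by linarith [this.1], by linarith [this.2]⟩
    set g : ℝ → ℂ := iteratedDeriv n (f ε) with hgdef
    have hgsm : ContDiff ℝ ((⊤ : ℕ∞) : WithTop ℕ∞) g := iteratedDeriv_smooth (f ε) (hsm ε hε) n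
    set v : ℂ := iteratedDeriv (n+1) (f ε) x with hvdef
    -- inner mean value estimate
    have hinner : ∀ z ∈ Icc x (x+δ), ‖iteratedDeriv (n+1) (f ε) z - v‖ ≤ (C₁ * ε ^ b₁) * δ := by
      intro z hz
      have hsub : Icc x (x+δ) ⊆ Icc (-(R+1)) (R+1) := by
        intro w hw
        exact ⟨le_trans hxicc.1 hw.1, le_trans hw.2 hxdicc.2⟩
      have hg1sm : ContDiff ℝ ((⊤ : ℕ∞) : WithTop ℕ∞) (iteratedDeriv (n+1) (f ε)) :=
        iteratedDeriv_smooth (f ε) (hsm ε hε) (n+1)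
      have hmvt := Convex.norm_image_sub_le_of_norm_hasDerivWithin_le
        (f := iteratedDeriv (n+1) (f ε)) (f' := fun w => deriv (iteratedDeriv (n+1) (f ε)) w)
        (s := Icc (-(R+1)) (R+1)) (C := C₁ * ε ^ b₁)
        (fun w _ => ((hg1sm.differentiable (by simp)) w).hasDerivAt.hasDerivWithinAt)
        (fun w hw => by rw [← iteratedDeriv_succ]; exact hmod1 ε hε hεb1 w hw)
        (convex_Icc _ _) hxicc (hsub hz)
      refine hmvt.trans ?_
      refine mul_le_mul_of_nonneg_left ?_ (by positivity)
      rw [Real.norm_eq_abs, abs_of_nonneg (by linarith [hz.1])]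
      linarith [hz.2]
    -- outer mean value estimate
    have houter : ‖g (x+δ) - g x - δ • v‖ ≤ (C₁ * ε ^ b₁) * δ * δ := by
      have hderw : ∀ z ∈ Icc x (x+δ), HasDerivWithinAt (fun w => g w - w • v)
          (iteratedDeriv (n+1) (f ε) z - v) (Icc x (x+δ)) z := by
        intro z hz
        have h1 : HasDerivAt g (iteratedDeriv (n+1) (f ε) z) z := by
          have hh := ((hgsm.differentiable (by simp)) z).hasDerivAt
          have heq : deriv g z = iteratedDeriv (n+1) (f ε) z := by
            rw [hgdef, ← iteratedDeriv_succ]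
          rwa [heq] at hh
        have h2 : HasDerivAt (fun w : ℝ => w • v) v z := by
          have := (hasDerivAt_id z).smul_const v
          simpa using this
        exact ((h1.sub h2)).hasDerivWithinAt
      have hmvt2 := Convex.norm_image_sub_le_of_norm_hasDerivWithin_le
        hderw hinner (convex_Icc _ _)
        (Set.left_mem_Icc.mpr (by linarith)) (Set.right_mem_Icc.mpr (by linarith))
      have h3 : (g (x+δ) - (x+δ)•v) - (g x - x•v) = g (x+δ) - g x - δ•v := by
        rw [add_smul]; abel
      have h4 : ‖(x+δ : ℝ) - x‖ = δ := by
        rw [Real.norm_eq_abs, add_sub_cancel_left, abs_of_pos hδpos]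
      rw [h3, h4] at hmvt2
      exact hmvt2
    -- combine
    have hkey : δ * ‖v‖ ≤ (C₁ * ε ^ b₁) * δ * δ + 2 * (C₂ * ε ^ (b + (M:ℝ))) := by
      have h6 : ‖δ • v‖ = δ * ‖v‖ := by
        rw [norm_smul, Real.norm_eq_abs, abs_of_pos hδpos]
      have h7 : ‖g (x+δ) - g x‖ ≤ 2 * (C₂ * ε ^ (b + (M:ℝ))) := by
        have ha := hDb ε hε hεb2 (x+δ) hxdicc
        have hb := hDb ε hε hεb2 x hxicc
        calc ‖g (x+δ) - g x‖ = ‖(g (x+δ) - g 0) - (g x - g 0)‖ := by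
              rw [sub_sub_sub_cancel_right]
          _ ≤ ‖g (x+δ) - g 0‖ + ‖g x - g 0‖ := norm_sub_le _ _
          _ ≤ 2 * (C₂ * ε ^ (b + (M:ℝ))) := by linarith
      have h10 := norm_sub_le (g (x+δ) - g x) (g (x+δ) - g x - δ•v)
      rw [sub_sub_cancel] at h10
      rw [h6] at h10
      linarith [houter, h7]
    have hfin : ‖v‖ ≤ (C₁ + 2*C₂) * ε ^ b := by
      rw [← mul_le_mul_iff_right₀ hδpos]
      refine hkey.trans ?_
      have e0 : ε ^ b₁ * δ ≤ ε ^ b := by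
        rw [hδdef, ← Real.rpow_add hε0]
        exact Real.rpow_le_rpow_of_exponent_ge hε0 hε1'.le hMb
      have e1 : (C₁ * ε ^ b₁) * δ * δ ≤ δ * (C₁ * ε ^ b) := by
        calc (C₁ * ε ^ b₁) * δ * δ = δ * (C₁ * (ε ^ b₁ * δ)) := by ring
          _ ≤ δ * (C₁ * ε ^ b) :=
              mul_le_mul_of_nonneg_left (mul_le_mul_of_nonneg_left e0 hC₁.le) hδpos.le
      have e2 : 2 * (C₂ * ε ^ (b + (M:ℝ))) = δ * (2*C₂*ε ^ b) := by
        rw [hδdef, Real.rpow_add hε0]; ring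
      calc (C₁ * ε ^ b₁)*δ*δ + 2*(C₂*ε ^ (b + (M:ℝ))) ≤ δ*(C₁*ε ^ b) + δ*(2*C₂*ε ^ b) := by
            rw [e2]; linarith
        _ = δ * ((C₁+2*C₂) * ε ^ b) := by ring
    exact hfin
  -- final assembly
  intro K hK n b
  rcases n with _ | n'
  · obtain ⟨C, hC, ε₀, hε₀, hbound⟩ := D 0 K hK b
    refine ⟨C, hC, ε₀, hε₀, fun ε hε hεlt x hx => ?_⟩
    have h1 := hbound ε hε hεlt x hx
    rw [norm_iteratedFDeriv_zero]
    simpa [iteratedDeriv_zero] using h1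
  · obtain ⟨C, hC, ε₀, hε₀, hbound⟩ := Astep n' K hK b
    refine ⟨C, hC, ε₀, hε₀, fun ε hε hεlt x hx => ?_⟩
    have h1 := hbound ε hε hεlt x hx
    rw [norm_iteratedFDeriv_eq_norm_iteratedDeriv]
    have h2 : iteratedDeriv (n'+1) (fun y => f ε y - f ε 0) x
        = iteratedDeriv (n'+1) (f ε) x - iteratedDeriv (n'+1) (fun _ => f ε 0) x :=
      iteratedDeriv_sub' (hsm ε hε) contDiff_const x
    rw [h2, iteratedDeriv_const_succ, sub_zero]
    exact h1
end
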